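/- For all integers r ≥ 6 and k ≥ 3 it holds that g_r(k) < 1 − (1 − 1/k)^{k−1}; in fact, for every a = (a_1,…,a_r) ∈ ℕ^r_{k−1}, g_r(a) < 5/9 ≤ 1 − (1 − 1/k)^{k−1}. -/

import Mathlib

open Finset

def HyperUniform {V : Type*} (k : ℕ) (H : Finset (Finset V)) : Prop := ∀ e ∈ H, e.card = k

def IsPM {V : Type*} [Fintype V] (H M : Finset (Finset V)) : Prop :=
  M ⊆ H ∧ (∀ e ∈ M, ∀ f ∈ M, e ≠ f → Disjoint e f) ∧ ∀ v : V, ∃ e ∈ M, v ∈ e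

def hdeg {V : Type*} [DecidableEq V] (H : Finset (Finset V)) (v : V) : ℕ :=
  (H.filter (fun e => v ∈ e)).card

def IsVec (k r : ℕ) (a : ℕ → ℕ) : Prop :=
  (∀ i j : ℕ, i ≤ j → j < r → a i ≤ a j) ∧ (∑ i ∈ Finset.range r, a i) = k - 1

noncomputable def gfun (k r : ℕ) (a : ℕ → ℕ) : ℝ :=
  (((k - 1).factorial : ℝ) / (∏ i ∈ Finset.range r, ((a i).factorial : ℝ))) *
    (∏ i ∈ Finset.range r, (((r * a i + 1 : ℕ) : ℝ) / ((r * k : ℕ) : ℝ)) ^ (a i)) *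
    (1 + ((a 0 : ℝ) / ((r * a 0 + 1 : ℕ) : ℝ)) *
      ∑ i ∈ Finset.Ico 1 r, ((r * a i + 1 : ℕ) : ℝ) / ((a i + 1 : ℕ) : ℝ))

noncomputable def gThr (k r : ℕ) : ℝ :=
  sSup {x : ℝ | ∃ a : ℕ → ℕ, IsVec k r a ∧ x = gfun k r a}

/-! ### Auxiliary lemmas -/

section Aux
open Real

/-- The decreasing sequence `(n/(n+1))^n`. -/
noncomputable def dseq (n : ℕ) : ℝ := ((n:ℝ)/(n+1))^n

lemma d_succ_le (n : ℕ) (hn : 1 ≤ n) : dseq (n+1) ≤ dseq n := by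
  unfold dseq
  have hx : (0:ℝ) < n := by exact_mod_cast hn
  set x := (n:ℝ) with hxd
  have h1 : (0:ℝ) < x+1 := by linarith
  have h2 : (0:ℝ) < x+2 := by linarith
  have hhalf : 1/(x+1)^2 ≤ 1 := by
    rw [div_le_one (by positivity)]; nlinarith
  have hb := one_add_mul_le_pow (a := -(1/(x+1)^2)) (by linarith) (n+1)
  have hL : 1 + ((n+1:ℕ):ℝ) * -(1/(x+1)^2) = x/(x+1) := by
    push_cast [← hxd]
    field_simp
    ring
  have hR : (1 + -(1/(x+1)^2)) = (x*(x+2))/(x+1)^2 := by field_simp; ring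
  rw [hL, hR, div_pow] at hb
  rw [div_le_div_iff₀ h1 (by positivity)] at hb
  rw [← pow_mul, mul_pow] at hb
  push_cast
  rw [div_pow, div_pow, div_le_div_iff₀ (by positivity) (by positivity)]
  have hc : (0:ℝ) < x*(x+1) := by positivity
  rw [← mul_le_mul_iff_right₀ hc]
  have e1 : x*(x+1) * ((x+1)^(n+1) * (x+1)^n) = x * (x+1)^(2*(n+1)) := by ring
  have e2 : x*(x+1) * (x^n * (x+1+1)^(n+1)) = x^(n+1) * (x+2)^(n+1) * (x+1) := by ring
  rw [e1, e2]
  exact hb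

lemma d_anti {p n : ℕ} (hp : 1 ≤ p) (h : p ≤ n) : dseq n ≤ dseq p := by
  induction n, h using Nat.le_induction with
  | base => exact le_refl _
  | succ n hn ih => exact le_trans (d_succ_le n (le_trans hp hn)) ih

lemma d_le_49 {n : ℕ} (h : 2 ≤ n) : dseq n ≤ 4/9 := by
  have := d_anti (by norm_num) h
  have h2 : dseq 2 = 4/9 := by unfold dseq; norm_num
  linarith

lemma d_le_25 {n : ℕ} (h : 6 ≤ n) : dseq n ≤ 2/5 := by
  have := d_anti (by norm_num) h
  have h6 : dseq 6 ≤ 2/5 := by unfold dseq; norm_num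
  linarith

lemma exp2_le : Real.exp 2 ≤ 7.39 := by
  have h := Real.exp_one_lt_d9
  have : Real.exp 2 = Real.exp 1 * Real.exp 1 := by rw [← Real.exp_add]; norm_num
  nlinarith [Real.exp_pos 1]

lemma exp43_le : Real.exp (4/3) ≤ 3.8 := by
  have h3 : Real.exp (4/3) ^ (3:ℕ) = Real.exp 1 ^ (4:ℕ) := by
    rw [← Real.exp_nat_mul, ← Real.exp_nat_mul]; norm_num
  have h := Real.exp_one_lt_d9
  have hp := Real.exp_pos 1
  have h4' : Real.exp 1 ^ (4:ℕ) < (2.7182818286:ℝ)^(4:ℕ) := by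
    exact pow_lt_pow_left₀ h hp.le (by norm_num)
  have h4 : Real.exp 1 ^ (4:ℕ) ≤ (3.8:ℝ)^(3:ℕ) := by nlinarith
  exact le_of_pow_le_pow_left₀ (by norm_num) (by norm_num : (0:ℝ) ≤ 3.8) (h3 ▸ h4)

lemma exp23_ge : (20/11:ℝ) ≤ Real.exp (2/3) := by
  have h3 : Real.exp (2/3) ^ (3:ℕ) = Real.exp 1 ^ (2:ℕ) := by
    rw [← Real.exp_nat_mul, ← Real.exp_nat_mul]; norm_num
  have h := Real.exp_one_gt_d9
  have hp := Real.exp_pos 1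
  have h4 : (20/11:ℝ)^(3:ℕ) ≤ Real.exp (2/3) ^ (3:ℕ) := by rw [h3]; nlinarith
  exact le_of_pow_le_pow_left₀ (by norm_num) (Real.exp_pos _).le h4

lemma expneg23_le : Real.exp (-(2/3)) ≤ 11/20 := by
  rw [Real.exp_neg]
  rw [inv_le_comm₀ (Real.exp_pos _) (by norm_num)]
  calc (11/20:ℝ)⁻¹ = 20/11 := by norm_num
    _ ≤ Real.exp (2/3) := exp23_ge

lemma sqrt_prod_eq {s : Finset ℕ} {f : ℕ → ℕ} :
    ∏ i ∈ s, Real.sqrt (f i) = Real.sqrt (∏ i ∈ s, ((f i):ℝ)) := by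
  induction s using Finset.cons_induction with
  | empty => simp
  | cons a s ha ih =>
      rw [Finset.prod_cons, Finset.prod_cons, ih, ← Real.sqrt_mul (by positivity)]

lemma sq25_le {m : ℕ} (hm : 3 ≤ m) : Real.sqrt m * (2/5)^m ≤ 1/8 := by
  have key : (m:ℝ) * (4/25)^m ≤ 1/64 := by
    induction m, hm using Nat.le_induction with
    | base => norm_num
    | succ m hm ih =>
        have h1 : ((m:ℝ)+1) ≤ (4/3) * m := by
          have : (3:ℝ) ≤ m := by exact_mod_cast hm
          linarith
        have hpp : (0:ℝ) < (4/25)^m := by positivity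
        calc ((m+1:ℕ):ℝ) * (4/25)^(m+1) = (4/25) * (((m:ℝ)+1) * (4/25)^m) := by push_cast; ring
          _ ≤ (4/25) * ((4/3) * m * (4/25)^m) := by nlinarith
          _ = (16/75) * ((m:ℝ) * (4/25)^m) := by ring
          _ ≤ (16/75) * (1/64) := by nlinarith [(by exact_mod_cast Nat.zero_le m : (0:ℝ) ≤ m)]
          _ ≤ 1/64 := by norm_num
  have h1 : ((2:ℝ)/5)^m = Real.sqrt ((4/25)^m) := by
    rw [show ((4:ℝ)/25) = (2/5)^2 by norm_num, ← pow_mul, mul_comm 2 m, pow_mul,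
      Real.sqrt_sq (by positivity)]
  rw [h1, ← Real.sqrt_mul (by positivity)]
  calc Real.sqrt ((m:ℝ) * (4/25)^m) ≤ Real.sqrt (1/64) := Real.sqrt_le_sqrt key
    _ = 1/8 := by
        rw [show (1/64:ℝ) = (1/8)^2 by norm_num, Real.sqrt_sq (by norm_num)]

lemma sqr15_le {r : ℕ} (hr : 6 ≤ r) : Real.sqrt r * (r:ℝ) * (2/5)^r ≤ 1/15 := by
  have key : (r:ℝ)^3 * (4/25)^r ≤ 1/225 := by
    induction r, hr using Nat.le_induction with
    | base => norm_num
    | succ r hr ih =>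
        have hc : (6:ℝ) ≤ r := by exact_mod_cast hr
        have h6 : (0:ℝ) ≤ (r:ℝ)-6 := by linarith
        have h1 : ((r:ℝ)+1)^3 ≤ (343/216) * (r:ℝ)^3 := by
          nlinarith [mul_nonneg (mul_nonneg h6 h6) h6, mul_nonneg h6 (sq_nonneg ((r:ℝ))), sq_nonneg ((r:ℝ)-6), sq_nonneg ((r:ℝ))]
        have hpp : (0:ℝ) < (4/25)^r := by positivity
        calc ((r+1:ℕ):ℝ)^3 * (4/25)^(r+1) = (4/25) * (((r:ℝ)+1)^3 * (4/25)^r) := by push_cast; ring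
          _ ≤ (4/25) * ((343/216) * (r:ℝ)^3 * (4/25)^r) := by nlinarith
          _ = (343/1350) * ((r:ℝ)^3 * (4/25)^r) := by ring
          _ ≤ (343/1350) * (1/225) := by nlinarith [pow_pos (lt_of_lt_of_le (by norm_num : (0:ℝ) < 6) hc) 3]
          _ ≤ 1/225 := by norm_num
  have h1 : ((2:ℝ)/5)^r = Real.sqrt ((4/25)^r) := by
    rw [show ((4:ℝ)/25) = (2/5)^2 by norm_num, ← pow_mul, mul_comm 2 r, pow_mul,
      Real.sqrt_sq (by positivity)]
  have h2 : (r:ℝ) = Real.sqrt ((r:ℝ)^2) := (Real.sqrt_sq (by positivity)).symm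
  rw [h1]
  nth_rewrite 2 [h2]
  rw [← Real.sqrt_mul (by positivity), ← Real.sqrt_mul (by positivity)]
  calc Real.sqrt ((r:ℝ) * (r:ℝ)^2 * (4/25)^r) = Real.sqrt ((r:ℝ)^3 * (4/25)^r) := by
        congr 1; ring
    _ ≤ Real.sqrt (1/225) := Real.sqrt_le_sqrt key
    _ = 1/15 := by rw [show (1/225:ℝ) = (1/15)^2 by norm_num, Real.sqrt_sq (by norm_num)]

lemma sqrt2_le : Real.sqrt 2 ≤ 1.5 := by
  rw [show (1.5:ℝ) = Real.sqrt (1.5^2) by rw [Real.sqrt_sq]; norm_num]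
  exact Real.sqrt_le_sqrt (by norm_num)

lemma sqrtpi_le_stirling (n : ℕ) (hn : 1 ≤ n) : Real.sqrt π ≤ Stirling.stirlingSeq n := by
  obtain ⟨m, rfl⟩ := Nat.exists_eq_add_of_le hn
  have h := Stirling.stirlingSeq'_antitone.le_of_tendsto
    (Stirling.tendsto_stirlingSeq_sqrt_pi.comp (Filter.tendsto_add_atTop_nat 1)) m
  simpa [Function.comp, add_comm 1 m] using h

lemma stirling_lower (n : ℕ) (hn : 1 ≤ n) :
    Real.sqrt π * (Real.sqrt (2*n) * ((n : ℝ) / Real.exp 1) ^ n) ≤ n.factorial := by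
  have h1 := sqrtpi_le_stirling n hn
  rw [Stirling.stirlingSeq] at h1
  have h2 : (0:ℝ) < Real.sqrt (2*n) * ((n : ℝ) / Real.exp 1) ^ n := by positivity
  calc Real.sqrt π * (Real.sqrt (2*n) * ((n : ℝ) / Real.exp 1) ^ n)
      ≤ (n.factorial / (Real.sqrt (2*n) * ((n : ℝ) / Real.exp 1) ^ n)) * (Real.sqrt (2*n) * ((n : ℝ) / Real.exp 1) ^ n) :=
        mul_le_mul_of_nonneg_right h1 h2.le
    _ = n.factorial := div_mul_cancel₀ _ h2.ne'

lemma stirling_upper (n : ℕ) (hn : 1 ≤ n) :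
    (n.factorial : ℝ) ≤ Real.exp 1 * Real.sqrt n * ((n : ℝ) / Real.exp 1) ^ n := by
  have h1 : Stirling.stirlingSeq n ≤ Stirling.stirlingSeq 1 := by
    obtain ⟨m, rfl⟩ := Nat.exists_eq_add_of_le hn
    simpa [Function.comp, add_comm 1 m] using Stirling.stirlingSeq'_antitone (Nat.zero_le m)
  rw [Stirling.stirlingSeq_one, Stirling.stirlingSeq] at h1
  have h2 : (0:ℝ) < Real.sqrt (2*n) * ((n : ℝ) / Real.exp 1) ^ n := by positivity
  have h3 := (div_le_iff₀ h2).mp h1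
  calc (n.factorial : ℝ) ≤ Real.exp 1 / Real.sqrt 2 * (Real.sqrt (2*n) * ((n : ℝ) / Real.exp 1) ^ n) := h3
    _ = Real.exp 1 * Real.sqrt n * ((n : ℝ) / Real.exp 1) ^ n := by
        rw [Real.sqrt_mul (by norm_num : (0:ℝ) ≤ 2)]
        have h4 : Real.sqrt 2 ≠ 0 := by positivity
        field_simp

lemma stirling_low' (j : ℕ) (hj : 1 ≤ j) :
    (5/2) * Real.sqrt j * ((j:ℝ)/Real.exp 1)^j ≤ (j.factorial : ℝ) := by
  have h := stirling_lower j hj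
  have h2 : Real.sqrt (2*(j:ℝ)) = Real.sqrt 2 * Real.sqrt j := Real.sqrt_mul (by norm_num) _
  have h25 : (5/2:ℝ) ≤ Real.sqrt π * Real.sqrt 2 := by
    rw [← Real.sqrt_mul Real.pi_nonneg]
    have hpi : (25/4:ℝ) ≤ π * 2 := by nlinarith [Real.pi_gt_d2]
    calc (5/2:ℝ) = Real.sqrt ((5/2)^2) := (Real.sqrt_sq (by norm_num)).symm
      _ ≤ Real.sqrt (π * 2) := Real.sqrt_le_sqrt (by nlinarith)
  calc (5/2) * Real.sqrt j * ((j:ℝ)/Real.exp 1)^j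
      ≤ (Real.sqrt π * Real.sqrt 2) * Real.sqrt j * ((j:ℝ)/Real.exp 1)^j := by
        apply mul_le_mul_of_nonneg_right (mul_le_mul_of_nonneg_right h25 (Real.sqrt_nonneg _))
        positivity
    _ = Real.sqrt π * (Real.sqrt (2*(j:ℝ)) * ((j:ℝ)/Real.exp 1)^j) := by rw [h2]; ring
    _ ≤ j.factorial := h

lemma alg1 (E1 E2 s t q w u v c c' : ℝ) (ht : t ≠ 0) (hq : q ≠ 0) (hw : w ≠ 0)
    (hv : v ≠ 0) (hc : c ≠ 0) (hcc : c' * c = 1) :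
    (E1 * s * (u / w)) * (E2 * q / v) / (c * t * (q / w)) = E1 * E2 * (s / t) * c' * (u / v) := by
  have hc' : c' = c⁻¹ := by field_simp at hcc ⊢; linarith [hcc]
  subst hc'
  field_simp

set_option maxHeartbeats 1000000 in
lemma core (r n m : ℕ) (a : ℕ → ℕ) (hr : 6 ≤ r) (hn : 1 ≤ n)
    (hsum : (∑ i ∈ Finset.range r, a i) = n)
    (hm : ((Finset.range r).filter (fun i => a i ≠ 0)).card = m) :
    (n.factorial : ℝ) / (∏ i ∈ Finset.range r, ((a i).factorial : ℝ)) *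
      ∏ i ∈ Finset.range r, (((r * a i + 1 : ℕ) : ℝ) / ((r * (n+1) : ℕ) : ℝ)) ^ (a i)
    ≤ Real.exp (1 + (m:ℝ)/(r:ℝ)) * Real.sqrt m * (2/5)^m * (((n:ℝ))^n/(((n:ℝ))+1)^n) := by
  classical
  set N := (Finset.range r).filter (fun i => a i ≠ 0) with hN
  have hNsum : ∑ i ∈ N, a i = n := by
    rw [hN, Finset.sum_filter_ne_zero]; exact hsum
  have hNne : N.Nonempty := by
    rw [Finset.nonempty_iff_ne_empty]
    intro h
    rw [h, Finset.sum_empty] at hNsum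
    omega
  have hm1 : 1 ≤ m := by
    rw [← hm]; exact Finset.card_pos.mpr hNne
  have hma : ∀ i ∈ N, 1 ≤ a i := by
    intro i hi
    have := (Finset.mem_filter.mp hi).2
    omega
  have hrpos : (0:ℝ) < r := by positivity
  have hmpos : (0:ℝ) < m := by positivity
  have hnpos : (0:ℝ) < n := by positivity
  have hD : ∏ i ∈ Finset.range r, ((a i).factorial : ℝ) = ∏ i ∈ N, ((a i).factorial : ℝ) := by
    refine (Finset.prod_filter_of_ne ?_).symm
    intro i _ h hzero
    apply h
    rw [hzero]
    norm_num
  have hP : ∏ i ∈ Finset.range r, (((r * a i + 1 : ℕ) : ℝ) / ((r * (n+1) : ℕ) : ℝ)) ^ (a i)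
      = ∏ i ∈ N, (((r * a i + 1 : ℕ) : ℝ) / ((r * (n+1) : ℕ) : ℝ)) ^ (a i) := by
    refine (Finset.prod_filter_of_ne ?_).symm
    intro i _ h hzero
    apply h
    rw [hzero, pow_zero]
  set Q := ∏ i ∈ N, ((a i:ℝ))^(a i) with hQ
  set Rr := ∏ i ∈ N, Real.sqrt (a i) with hRr
  have hQpos : 0 < Q := Finset.prod_pos (fun i hi => by
    have := hma i hi; positivity)
  have hRpos : 0 < Rr := Finset.prod_pos (fun i hi => by
    have h1 := hma i hi
    have : (0:ℝ) < a i := by exact_mod_cast h1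
    exact Real.sqrt_pos.mpr this)
  have hEq1 : ∏ i ∈ N, ((a i:ℝ)/Real.exp 1)^(a i) = Q / Real.exp 1 ^ n := by
    rw [hQ, ← hNsum, ← Finset.prod_pow_eq_pow_sum, ← Finset.prod_div_distrib]
    exact Finset.prod_congr rfl (fun i _ => div_pow _ _ _)
  have hDlow : (5/2:ℝ)^m * Rr * (Q / Real.exp 1 ^ n) ≤ ∏ i ∈ N, ((a i).factorial : ℝ) := by
    rw [← hEq1, hRr]
    calc (5/2:ℝ)^m * (∏ i ∈ N, Real.sqrt (a i)) * (∏ i ∈ N, ((a i:ℝ)/Real.exp 1)^(a i))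
        = ∏ i ∈ N, ((5/2) * Real.sqrt (a i) * ((a i:ℝ)/Real.exp 1)^(a i)) := by
          rw [Finset.prod_mul_distrib, Finset.prod_mul_distrib, Finset.prod_const, hm]
      _ ≤ ∏ i ∈ N, ((a i).factorial : ℝ) :=
          Finset.prod_le_prod (fun i hi => by positivity)
            (fun i hi => stirling_low' _ (hma i hi))
  have hDlowpos : (0:ℝ) < (5/2:ℝ)^m * Rr * (Q / Real.exp 1 ^ n) := by positivity
  have hPb : ∏ i ∈ N, (((r * a i + 1 : ℕ) : ℝ) / ((r * (n+1) : ℕ) : ℝ)) ^ (a i)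
      ≤ Real.exp ((m:ℝ)/r) * Q / ((n:ℝ)+1)^n := by
    have step : ∀ i ∈ N, (((r * a i + 1 : ℕ) : ℝ) / ((r * (n+1) : ℕ) : ℝ)) ^ (a i)
        ≤ Real.exp (1/(r:ℝ)) * ((a i:ℝ))^(a i) / ((n:ℝ)+1)^(a i) := by
      intro i hi
      have hai : 1 ≤ a i := hma i hi
      have hA : (1:ℝ) ≤ (a i : ℝ) := by exact_mod_cast hai
      have hApos : (0:ℝ) < (a i : ℝ) := by linarith
      have hexp : 1 + 1/((r:ℝ)*(a i)) ≤ Real.exp (1/((r:ℝ)*(a i))) := by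
        have := Real.add_one_le_exp (1/((r:ℝ)*(a i)))
        linarith
      have hbase : (((r * a i + 1 : ℕ) : ℝ) / ((r * (n+1) : ℕ) : ℝ))
          ≤ (a i : ℝ) * Real.exp (1/((r:ℝ)*(a i))) / ((n:ℝ)+1) := by
        push_cast
        have h1 : (r:ℝ) * (a i) + 1 = (a i) * (1 + 1/((r:ℝ)*(a i))) * r := by
          field_simp
        rw [h1]
        rw [div_le_div_iff₀ (by positivity) (by positivity)]
        have h2 : (0:ℝ) < (n:ℝ)+1 := by positivity
        calc (a i : ℝ) * (1 + 1/((r:ℝ)*(a i))) * r * ((n:ℝ)+1)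
            ≤ (a i : ℝ) * Real.exp (1/((r:ℝ)*(a i))) * r * ((n:ℝ)+1) := by
              apply mul_le_mul_of_nonneg_right _ h2.le
              apply mul_le_mul_of_nonneg_right _ hrpos.le
              exact mul_le_mul_of_nonneg_left hexp hApos.le
          _ = (a i : ℝ) * Real.exp (1/((r:ℝ)*(a i))) * ((r:ℝ)*((n:ℝ)+1)) := by ring
      have hbnn : (0:ℝ) ≤ (((r * a i + 1 : ℕ) : ℝ) / ((r * (n+1) : ℕ) : ℝ)) := by positivity
      calc (((r * a i + 1 : ℕ) : ℝ) / ((r * (n+1) : ℕ) : ℝ)) ^ (a i)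
          ≤ ((a i : ℝ) * Real.exp (1/((r:ℝ)*(a i))) / ((n:ℝ)+1)) ^ (a i) :=
            pow_le_pow_left₀ hbnn hbase _
        _ = Real.exp (1/(r:ℝ)) * ((a i:ℝ))^(a i) / ((n:ℝ)+1)^(a i) := by
            rw [div_pow, mul_pow, ← Real.exp_nat_mul]
            rw [show ((a i:ℝ)) * (1/((r:ℝ)*(a i))) = 1/(r:ℝ) by field_simp]
            ring
    calc ∏ i ∈ N, (((r * a i + 1 : ℕ) : ℝ) / ((r * (n+1) : ℕ) : ℝ)) ^ (a i)
        ≤ ∏ i ∈ N, (Real.exp (1/(r:ℝ)) * ((a i:ℝ))^(a i) / ((n:ℝ)+1)^(a i)) :=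
          Finset.prod_le_prod (fun i hi => by positivity) step
      _ = Real.exp ((m:ℝ)/r) * Q / ((n:ℝ)+1)^n := by
          rw [Finset.prod_div_distrib, Finset.prod_mul_distrib, Finset.prod_const, hm,
            Finset.prod_pow_eq_pow_sum, hNsum, hQ, ← Real.exp_nat_mul]
          rw [show (m:ℝ) * (1/(r:ℝ)) = (m:ℝ)/(r:ℝ) by ring]
  have hnum := stirling_upper n hn
  have hPnn : 0 ≤ ∏ i ∈ N, (((r * a i + 1 : ℕ) : ℝ) / ((r * (n+1) : ℕ) : ℝ)) ^ (a i) :=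
    Finset.prod_nonneg (fun i hi => by positivity)
  have hcomb : (n.factorial : ℝ) / (∏ i ∈ Finset.range r, ((a i).factorial : ℝ)) *
      ∏ i ∈ Finset.range r, (((r * a i + 1 : ℕ) : ℝ) / ((r * (n+1) : ℕ) : ℝ)) ^ (a i)
      ≤ (Real.exp 1 * Real.sqrt n * ((n : ℝ) / Real.exp 1) ^ n) *
        (Real.exp ((m:ℝ)/r) * Q / ((n:ℝ)+1)^n) / ((5/2:ℝ)^m * Rr * (Q / Real.exp 1 ^ n)) := by
    rw [hD, hP, div_mul_eq_mul_div]
    apply div_le_div₀ (by positivity)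
    · exact mul_le_mul hnum hPb hPnn (by positivity)
    · exact hDlowpos
    · exact hDlow
  have hsimp : (Real.exp 1 * Real.sqrt n * ((n : ℝ) / Real.exp 1) ^ n) *
        (Real.exp ((m:ℝ)/r) * Q / ((n:ℝ)+1)^n) / ((5/2:ℝ)^m * Rr * (Q / Real.exp 1 ^ n))
      = Real.exp (1 + (m:ℝ)/r) * (Real.sqrt n / Rr) * (2/5)^m * (((n:ℝ))^n/(((n:ℝ))+1)^n) := by
    have e1 : Real.exp 1 ^ n ≠ 0 := by positivity
    have e2 : Q ≠ 0 := hQpos.ne'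
    have e3 : Rr ≠ 0 := hRpos.ne'
    have e4 : ((n:ℝ)+1)^n ≠ 0 := by positivity
    have e5 : ((5:ℝ)/2)^m ≠ 0 := by positivity
    have e6 : ((2:ℝ)/5)^m * ((5:ℝ)/2)^m = 1 := by
      rw [← mul_pow]; norm_num
    rw [Real.exp_add, div_pow]
    exact alg1 _ _ _ _ _ _ _ _ _ _ e3 e2 e1 e4 e5 e6
  rw [hsimp] at hcomb
  refine le_trans hcomb ?_
  have hR2 : Real.sqrt n / Rr ≤ Real.sqrt m := by
    have hprodge : ((n:ℝ)/m) ≤ ∏ i ∈ N, (a i:ℝ) := by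
      obtain ⟨j, hjN, hjmax⟩ := Finset.exists_max_image N a hNne
      have h1 : n ≤ m * a j := by
        have := Finset.sum_le_card_nsmul N a (a j) (fun i hi => hjmax i hi)
        rw [hNsum, hm] at this
        simpa [smul_eq_mul] using this
      have h2 : a j ≤ ∏ i ∈ N, a i := Finset.single_le_prod' (fun i hi => hma i hi) hjN
      have h3 : (n:ℝ) ≤ (m:ℝ) * ∏ i ∈ N, (a i:ℝ) := by
        have : n ≤ m * ∏ i ∈ N, a i := le_trans h1 (Nat.mul_le_mul_left m h2)
        exact_mod_cast this
      rw [div_le_iff₀ hmpos]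
      linarith [h3]
    have hRr_eq : Rr = Real.sqrt (∏ i ∈ N, ((a i):ℝ)) := sqrt_prod_eq
    have hge : Real.sqrt ((n:ℝ)/m) ≤ Rr := by
      rw [hRr_eq]
      exact Real.sqrt_le_sqrt hprodge
    have hnm : (0:ℝ) < (n:ℝ)/m := by positivity
    calc Real.sqrt n / Rr ≤ Real.sqrt n / Real.sqrt ((n:ℝ)/m) := by
          apply div_le_div_of_nonneg_left (Real.sqrt_nonneg _) (Real.sqrt_pos.mpr hnm) hge
      _ = Real.sqrt ((n:ℝ)/((n:ℝ)/m)) := (Real.sqrt_div (by positivity) _).symm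
      _ = Real.sqrt m := by
          congr 1
          field_simp
  have hd : (0:ℝ) ≤ ((n:ℝ))^n/(((n:ℝ))+1)^n := by positivity
  calc Real.exp (1 + (m:ℝ)/r) * (Real.sqrt n / Rr) * (2/5)^m * (((n:ℝ))^n/(((n:ℝ))+1)^n)
      ≤ Real.exp (1 + (m:ℝ)/r) * Real.sqrt m * (2/5)^m * (((n:ℝ))^n/(((n:ℝ))+1)^n) := by
        apply mul_le_mul_of_nonneg_right _ hd
        apply mul_le_mul_of_nonneg_right _ (by positivity)
        exact mul_le_mul_of_nonneg_left hR2 (Real.exp_pos _).le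
    _ = _ := rfl

set_option maxHeartbeats 2000000 in
lemma gfun_le (k r : ℕ) (hr : 6 ≤ r) (hk : 3 ≤ k) (a : ℕ → ℕ) (hv : IsVec k r a) :
    gfun k r a ≤ 11/20 := by
  classical
  obtain ⟨n, rfl⟩ : ∃ n, k = n + 1 := ⟨k - 1, by omega⟩
  have hn2 : 2 ≤ n := by omega
  have hn1 : 1 ≤ n := by omega
  obtain ⟨hmono, hsum⟩ := hv
  rw [show n + 1 - 1 = n from rfl] at hsum
  have hrpos : (0:ℝ) < r := by positivity
  set N := (Finset.range r).filter (fun i => a i ≠ 0) with hN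
  set m := N.card with hm
  have hNsum : ∑ i ∈ N, a i = n := by
    rw [hN, Finset.sum_filter_ne_zero]; exact hsum
  have hNne : N.Nonempty := by
    rw [Finset.nonempty_iff_ne_empty]
    intro h
    rw [h, Finset.sum_empty] at hNsum
    omega
  have hm1 : 1 ≤ m := Finset.card_pos.mpr hNne
  have hmler : m ≤ r := by
    calc m ≤ (Finset.range r).card := Finset.card_filter_le _ _
      _ = r := Finset.card_range r
  set A := ((n.factorial : ℝ) / (∏ i ∈ Finset.range r, ((a i).factorial : ℝ))) with hA
  set P := (∏ i ∈ Finset.range r, (((r * a i + 1 : ℕ) : ℝ) / ((r * (n+1) : ℕ) : ℝ)) ^ (a i)) with hP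
  set B := (1 + ((a 0 : ℝ) / ((r * a 0 + 1 : ℕ) : ℝ)) *
      ∑ i ∈ Finset.Ico 1 r, ((r * a i + 1 : ℕ) : ℝ) / ((a i + 1 : ℕ) : ℝ)) with hB
  have hg : gfun (n+1) r a = A * P * B := by
    unfold gfun
    rw [show n + 1 - 1 = n from rfl]
  rw [hg]
  have hAnn : 0 ≤ A := by
    rw [hA]
    positivity
  have hPnn : 0 ≤ P := by
    rw [hP]
    exact Finset.prod_nonneg (fun i _ => by positivity)
  have hcore := core r n m a hr hn1 hsum hm.symm
  have hd49 : ((n:ℝ))^n/(((n:ℝ))+1)^n ≤ 4/9 := by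
    have h := d_le_49 hn2
    unfold dseq at h
    rwa [div_pow] at h
  have hr6 : (6:ℝ) ≤ r := by exact_mod_cast hr
  by_cases h0 : a 0 = 0
  · have hB1 : B = 1 := by
      rw [hB, h0]
      norm_num
    rw [hB1, mul_one]
    rcases eq_or_lt_of_le hm1 with hm1' | hm2
    · -- m = 1
      obtain ⟨j, hj⟩ := Finset.card_eq_one.mp hm1'.symm
      have hajn : a j = n := by
        rw [hj, Finset.sum_singleton] at hNsum
        exact hNsum
      have hDeq : ∏ i ∈ Finset.range r, ((a i).factorial : ℝ) = ∏ i ∈ N, ((a i).factorial : ℝ) := by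
        refine (Finset.prod_filter_of_ne ?_).symm
        intro i _ h hzero
        apply h
        rw [hzero]
        norm_num
      have hPeq : ∏ i ∈ Finset.range r, (((r * a i + 1 : ℕ) : ℝ) / ((r * (n+1) : ℕ) : ℝ)) ^ (a i)
          = ∏ i ∈ N, (((r * a i + 1 : ℕ) : ℝ) / ((r * (n+1) : ℕ) : ℝ)) ^ (a i) := by
        refine (Finset.prod_filter_of_ne ?_).symm
        intro i _ h hzero
        apply h
        rw [hzero, pow_zero]
      have hAval : A = 1 := by
        rw [hA, hDeq, hj, Finset.prod_singleton, hajn, div_self (by positivity)]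
      have hPval : P = (((r * n + 1 : ℕ) : ℝ) / ((r * (n+1) : ℕ) : ℝ)) ^ n := by
        rw [hP, hPeq, hj, Finset.prod_singleton, hajn]
      rw [hAval, one_mul, hPval]
      set x := (((r * n + 1 : ℕ) : ℝ) / ((r * (n+1) : ℕ) : ℝ)) with hx
      have hxnn : 0 ≤ x := by rw [hx]; positivity
      rcases Nat.lt_or_ge n 4 with hn4 | hn4
      · interval_cases n
        · have hxle : x ≤ 13/18 := by
            rw [hx]
            push_cast
            rw [div_le_div_iff₀ (by positivity) (by norm_num)]
            nlinarith
          calc x ^ 2 ≤ (13/18)^2 := pow_le_pow_left₀ hxnn hxle 2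
            _ ≤ 11/20 := by norm_num
        · have hxle : x ≤ 19/24 := by
            rw [hx]
            push_cast
            rw [div_le_div_iff₀ (by positivity) (by norm_num)]
            nlinarith
          calc x ^ 3 ≤ (19/24)^3 := pow_le_pow_left₀ hxnn hxle 3
            _ ≤ 11/20 := by norm_num
      · have hnr4 : (4:ℝ) ≤ n := by exact_mod_cast hn4
        set t := ((r:ℝ)-1)/((r:ℝ)*((n:ℝ)+1)) with ht
        have hxeq : x = 1 - t := by
          rw [hx, ht]
          push_cast
          field_simp
          ring
        have hxexp : x ≤ Real.exp (-t) := by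
          rw [hxeq]
          have := Real.add_one_le_exp (-t)
          linarith
        have hkey : (2/3:ℝ) ≤ (n:ℝ) * t := by
          rw [ht, mul_div_assoc']
          rw [le_div_iff₀ (by positivity)]
          nlinarith [mul_nonneg (by linarith : (0:ℝ) ≤ (n:ℝ)-4) (by linarith : (0:ℝ) ≤ (r:ℝ)-6)]
        calc x ^ n ≤ Real.exp (-t) ^ n := pow_le_pow_left₀ hxnn hxexp n
          _ = Real.exp ((n:ℝ) * (-t)) := by rw [← Real.exp_nat_mul]
          _ ≤ Real.exp (-(2/3)) := by
              apply Real.exp_le_exp.mpr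
              linarith
          _ ≤ 11/20 := expneg23_le
    · -- 2 ≤ m
      refine le_trans hcore ?_
      rcases eq_or_lt_of_le (show 2 ≤ m from hm2) with hm2' | hm3
      · -- m = 2
        have hm2R : (m:ℝ) = 2 := by rw [← hm2']; norm_num
        have hpm : ((2:ℝ)/5)^m = (2/5)^(2:ℕ) := by rw [← hm2']
        have hsm : Real.sqrt (m:ℝ) ≤ 1.5 := by rw [hm2R]; exact sqrt2_le
        have he : Real.exp (1 + (m:ℝ)/(r:ℝ)) ≤ 3.8 := by
          rw [hm2R]
          refine le_trans (Real.exp_le_exp.mpr ?_) exp43_le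
          rw [show (4/3:ℝ) = 1 + 1/3 by norm_num]
          have : (2:ℝ)/(r:ℝ) ≤ 1/3 := by
            rw [div_le_div_iff₀ hrpos (by norm_num)]
            linarith
          linarith
        have hmain : Real.exp (1 + (m:ℝ)/(r:ℝ)) * Real.sqrt (m:ℝ) ≤ 3.8 * 1.5 :=
          mul_le_mul he hsm (Real.sqrt_nonneg _) (by norm_num)
        calc Real.exp (1 + (m:ℝ)/(r:ℝ)) * Real.sqrt (m:ℝ) * (2/5)^m * (((n:ℝ))^n/(((n:ℝ))+1)^n)
            ≤ (3.8 * 1.5) * (2/5)^(2:ℕ) * (4/9) := by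
              rw [hpm]
              apply mul_le_mul _ hd49 (by positivity) (by norm_num)
              exact mul_le_mul_of_nonneg_right hmain (by positivity)
          _ ≤ 11/20 := by norm_num
      · -- 3 ≤ m
        have hm3' : 3 ≤ m := hm3
        have he : Real.exp (1 + (m:ℝ)/(r:ℝ)) ≤ 7.39 := by
          refine le_trans (Real.exp_le_exp.mpr ?_) exp2_le
          have h1 : (m:ℝ) ≤ r := by exact_mod_cast hmler
          have : (m:ℝ)/(r:ℝ) ≤ 1 := by
            rw [div_le_one hrpos]; exact h1
          linarith
        have hsq := sq25_le hm3'
        calc Real.exp (1 + (m:ℝ)/(r:ℝ)) * Real.sqrt m * (2/5)^m * (((n:ℝ))^n/(((n:ℝ))+1)^n)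
            = Real.exp (1 + (m:ℝ)/(r:ℝ)) * (Real.sqrt m * (2/5)^m) * (((n:ℝ))^n/(((n:ℝ))+1)^n) := by
              ring
          _ ≤ 7.39 * (1/8) * (4/9) := by
              apply mul_le_mul _ hd49 (by positivity) (by norm_num)
              apply mul_le_mul he hsq (by positivity) (by norm_num)
          _ ≤ 11/20 := by norm_num
  · -- a 0 ≠ 0 : all entries ≥ 1
    have ha1 : ∀ i ∈ Finset.range r, 1 ≤ a i := by
      intro i hi
      have := hmono 0 i (Nat.zero_le i) (Finset.mem_range.mp hi)
      omega
    have hNall : N = Finset.range r := by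
      rw [hN]
      apply Finset.filter_true_of_mem
      intro i hi
      have := ha1 i hi
      omega
    have hmr : m = r := by rw [hm, hNall, Finset.card_range]
    have hnr : r ≤ n := by
      have h1 : (Finset.range r).card • 1 ≤ ∑ i ∈ Finset.range r, a i :=
        Finset.card_nsmul_le_sum _ _ _ ha1
      rw [hsum] at h1
      simpa using h1
    have hn6 : 6 ≤ n := le_trans hr hnr
    have hd25 : ((n:ℝ))^n/(((n:ℝ))+1)^n ≤ 2/5 := by
      have h := d_le_25 hn6
      unfold dseq at h
      rwa [div_pow] at h
    -- bound on B
    have hc1 : (a 0 : ℝ)/((r * a 0 + 1 : ℕ):ℝ) ≤ 1/(r:ℝ) := by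
      push_cast
      rw [div_le_div_iff₀ (by positivity) hrpos]
      nlinarith [(by exact_mod_cast Nat.zero_le (a 0) : (0:ℝ) ≤ (a 0:ℝ))]
    have hcnn : (0:ℝ) ≤ (a 0 : ℝ)/((r * a 0 + 1 : ℕ):ℝ) := by positivity
    have hsnn : (0:ℝ) ≤ ∑ i ∈ Finset.Ico 1 r, ((r * a i + 1 : ℕ) : ℝ) / ((a i + 1 : ℕ) : ℝ) :=
      Finset.sum_nonneg (fun i _ => by positivity)
    have hsumB : ∑ i ∈ Finset.Ico 1 r, ((r * a i + 1 : ℕ) : ℝ) / ((a i + 1 : ℕ) : ℝ)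
        ≤ ((r-1:ℕ):ℝ) * (r:ℝ) := by
      have hterm : ∀ i ∈ Finset.Ico 1 r, ((r * a i + 1 : ℕ) : ℝ) / ((a i + 1 : ℕ) : ℝ) ≤ (r:ℝ) := by
        intro i _
        push_cast
        rw [div_le_iff₀ (by positivity)]
        nlinarith [(by exact_mod_cast Nat.zero_le (a i) : (0:ℝ) ≤ (a i:ℝ)), hr6]
      calc ∑ i ∈ Finset.Ico 1 r, ((r * a i + 1 : ℕ) : ℝ) / ((a i + 1 : ℕ) : ℝ)
          ≤ (Finset.Ico 1 r).card • (r:ℝ) := Finset.sum_le_card_nsmul _ _ _ hterm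
        _ = ((r-1:ℕ):ℝ) * (r:ℝ) := by
            rw [Nat.card_Ico]
            simp [smul_eq_mul]
    have hBle : B ≤ (r:ℝ) := by
      rw [hB]
      have hmul : (a 0 : ℝ)/((r * a 0 + 1 : ℕ):ℝ) *
          (∑ i ∈ Finset.Ico 1 r, ((r * a i + 1 : ℕ) : ℝ) / ((a i + 1 : ℕ) : ℝ))
          ≤ (1/(r:ℝ)) * (((r-1:ℕ):ℝ) * (r:ℝ)) :=
        mul_le_mul hc1 hsumB hsnn (by positivity)
      have hfin : 1 + (1/(r:ℝ)) * (((r-1:ℕ):ℝ) * (r:ℝ)) = (r:ℝ) := by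
        rw [Nat.cast_sub (by omega)]
        push_cast
        field_simp
        ring
      linarith
    have hBnn : 0 ≤ B := by
      rw [hB]
      nlinarith [mul_nonneg hcnn hsnn]
    have hcore' : A * P ≤ Real.exp 2 * Real.sqrt r * (2/5)^r * (((n:ℝ))^n/(((n:ℝ))+1)^n) := by
      rw [hmr] at hcore
      rw [show (1 + (r:ℝ)/(r:ℝ)) = 2 by rw [div_self hrpos.ne']; norm_num] at hcore
      exact hcore
    calc A * P * B ≤ (Real.exp 2 * Real.sqrt r * (2/5)^r * (((n:ℝ))^n/(((n:ℝ))+1)^n)) * (r:ℝ) :=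
          mul_le_mul hcore' hBle hBnn (by positivity)
      _ = Real.exp 2 * (Real.sqrt r * (r:ℝ) * (2/5)^r) * (((n:ℝ))^n/(((n:ℝ))+1)^n) := by ring
      _ ≤ 7.39 * (1/15) * (2/5) := by
          apply mul_le_mul _ hd25 (by positivity) (by norm_num)
          apply mul_le_mul exp2_le (sqr15_le hr) (by positivity) (by norm_num)
      _ ≤ 11/20 := by norm_num

end Aux

theorem gr_lt_f0_r6 (k r : ℕ) (hr : 6 ≤ r) (hk : 3 ≤ k) :
    gThr k r < 1 - (1 - 1 / (k : ℝ)) ^ (k - 1) ∧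
    (∀ a : ℕ → ℕ, IsVec k r a → gfun k r a < 5 / 9) ∧
    (5 / 9 : ℝ) ≤ 1 - (1 - 1 / (k : ℝ)) ^ (k - 1) := by
  have key : ∀ a : ℕ → ℕ, IsVec k r a → gfun k r a ≤ 11/20 := fun a hv => gfun_le k r hr hk a hv
  have hrhs : (1 - 1 / (k : ℝ)) ^ (k - 1) ≤ 4/9 := by
    obtain ⟨n, rfl⟩ : ∃ n, k = n + 1 := ⟨k - 1, by omega⟩
    have hn2 : 2 ≤ n := by omega
    have heq : (1 - 1 / ((n+1:ℕ) : ℝ)) = (n:ℝ)/((n:ℝ)+1) := by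
      have : ((n+1:ℕ):ℝ) = (n:ℝ)+1 := by push_cast; ring
      rw [this]
      field_simp
      ring
    rw [show n + 1 - 1 = n from rfl, heq]
    exact d_le_49 hn2
  refine ⟨?_, ?_, ?_⟩
  · have h1 : gThr k r ≤ 11/20 := by
      apply Real.sSup_le _ (by norm_num)
      rintro x ⟨a, hva, rfl⟩
      exact key a hva
    have h2 : (11/20:ℝ) < 1 - (1 - 1 / (k : ℝ)) ^ (k - 1) := by linarith
    linarith
  · intro a hva
    have := key a hva
    linarith
  · linarith
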